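/- arXiv:2307.00802 — 2 statements merged into one kernel-verified Lean document; each statement's English description precedes it below -/
import Mathlib

section
/- Let ε, L ≥ 0 and suppose nonnegative reals e_n^k satisfy e_n^{k+1} ≤ ε e_{n-1}^k + L e_{n-1}^{k+1} with e_0^k = 0 for all k, and e_n^0 ≤ M for all n. Then e_n^k ≤ M ε^k ∑_{j=0}^{n-1-k} binomial(k-1+j, j) L^j for n > k, and e_n^k = 0 for n ≤ k. -/
theorem stmt_6 (ε L M : ℝ) (hε : 0 ≤ ε) (hL : 0 ≤ L)
    (e : ℕ → ℕ → ℝ) (hpos : ∀ k m, 0 ≤ e k m)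
    (h0 : ∀ k, e k 0 = 0)
    (hrec : ∀ k m, e (k + 1) (m + 1) ≤ ε * e k m + L * e (k + 1) m)
    (hinit : ∀ m, e 0 m ≤ M) :
    (∀ k m, m ≤ k → e k m = 0) ∧
      (∀ k m, k < m →
        e k m ≤ M * ε ^ k *
          ∑ j ∈ Finset.range (m - k), (Nat.choose (k - 1 + j) j : ℝ) * L ^ j) := by
  have hM : 0 ≤ M := le_trans (hpos 0 0) (hinit 0)
  have hzero : ∀ m k, m ≤ k → e k m = 0 := by
    intro m
    induction m with
    | zero => intro k _; exact h0 k
    | succ m ih =>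
      intro k hk
      obtain ⟨k', rfl⟩ : ∃ k', k = k' + 1 := ⟨k - 1, by omega⟩
      have h1 := hrec k' m
      have h2 : e k' m = 0 := ih k' (by omega)
      have h3 : e (k' + 1) m = 0 := ih (k' + 1) (by omega)
      have h4 := hpos (k' + 1) (m + 1)
      nlinarith
  have sumnn : ∀ (a : ℕ → ℕ) d, 0 ≤ ∑ j ∈ Finset.range d, ((a j : ℝ)) * L ^ j := by
    intro a d
    exact Finset.sum_nonneg fun j _ => mul_nonneg (Nat.cast_nonneg _) (pow_nonneg hL j)
  have key : ∀ t s : ℕ,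
      (∑ j ∈ Finset.range (s + 1), (((t + j).choose j : ℝ)) * L ^ j)
        + L * ∑ j ∈ Finset.range s, (((t + 1 + j).choose j : ℝ)) * L ^ j
      = ∑ j ∈ Finset.range (s + 1), (((t + 1 + j).choose j : ℝ)) * L ^ j := by
    intro t s
    induction s with
    | zero => simp
    | succ s ih =>
      rw [Finset.sum_range_succ, Finset.sum_range_succ
        (f := fun j => (((t + 1 + j).choose j : ℝ)) * L ^ j),
        Finset.sum_range_succ
        (f := fun j => (((t + 1 + j).choose j : ℝ)) * L ^ j) (n := s + 1)]
      have hp : (t + 1 + (s + 1)).choose (s + 1)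
          = (t + (s + 1)).choose (s + 1) + (t + 1 + s).choose s := by
        have e1 : t + 1 + (s + 1) = (t + 1 + s) + 1 := by ring
        have e2 : t + (s + 1) = t + 1 + s := by omega
        rw [e1, Nat.choose_succ_succ, e2]
        exact Nat.add_comm _ _
      push_cast [hp]
      linear_combination ih
  have key0 : ∀ s : ℕ, 1 + L * ∑ j ∈ Finset.range s, ((j.choose j : ℝ)) * L ^ j
      = ∑ j ∈ Finset.range (s + 1), ((j.choose j : ℝ)) * L ^ j := by
    intro s
    simp only [Nat.choose_self, Nat.cast_one, one_mul]
    rw [geom_sum_succ]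
    ring
  refine ⟨fun k m h => hzero m k h, ?_⟩
  have main : ∀ m k, k < m →
      e k m ≤ M * ε ^ k *
        ∑ j ∈ Finset.range (m - k), (((k - 1 + j).choose j : ℝ)) * L ^ j := by
    intro m
    induction m with
    | zero => intro k h; omega
    | succ m ih =>
      intro k hk
      match k with
      | 0 =>
        simp only [pow_zero, mul_one, Nat.zero_sub, Nat.zero_add, Nat.sub_zero]
        have h1 : (1 : ℝ) ≤ ∑ j ∈ Finset.range (m + 1), ((j.choose j : ℝ)) * L ^ j := by
          simp only [Nat.choose_self, Nat.cast_one, one_mul]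
          calc (1 : ℝ) = L ^ 0 := by simp
          _ ≤ _ := Finset.single_le_sum (f := fun j => L ^ j)
              (fun j _ => pow_nonneg hL j) (Finset.mem_range.mpr (Nat.succ_pos m))
        calc e 0 (m + 1) ≤ M := hinit (m + 1)
        _ = M * 1 := by ring
        _ ≤ _ := by
          apply mul_le_mul_of_nonneg_left h1 hM
      | (k' + 1) =>
        have hk' : k' < m := by omega
        have h1 := hrec k' m
        simp only [Nat.add_sub_cancel]
        -- target sum: range (m - k'), coeff (k' + j).choose j
        rcases Nat.lt_or_ge (k' + 1) m with hlt | hge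
        · -- m - k' = s + 2 with s = m - k' - 2; general case
          -- bound on e (k'+1) m from ih
          have B2 : e (k' + 1) m ≤ M * ε ^ (k' + 1) *
              ∑ j ∈ Finset.range (m - (k' + 1)), (((k' + j).choose j : ℝ)) * L ^ j := by
            have := ih (k' + 1) hlt
            simpa only [Nat.add_sub_cancel] using this
          match k' with
          | 0 =>
            have B1 : e 0 m ≤ M := hinit m
            obtain ⟨s, hs⟩ : ∃ s, m - 1 = s + 1 := ⟨m - 2, by omega⟩
            have hm : m + 1 - (0 + 1) = (s + 1) + 1 := by omega
            rw [hm]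
            have hk0 := key0 (s + 1)
            have expand : ∑ j ∈ Finset.range (s + 1 + 1), (((0 + j).choose j : ℝ)) * L ^ j
                = ∑ j ∈ Finset.range (s + 1 + 1), ((j.choose j : ℝ)) * L ^ j := by
              simp
            rw [expand, ← hk0]
            rw [hs] at B2
            have expand2 : ∑ j ∈ Finset.range (s + 1), (((0 + j).choose j : ℝ)) * L ^ j
                = ∑ j ∈ Finset.range (s + 1), ((j.choose j : ℝ)) * L ^ j := by simp
            rw [expand2] at B2
            have snn := sumnn (fun j => j.choose j) (s + 1)
            calc e (0 + 1) (m + 1) ≤ ε * e 0 m + L * e (0 + 1) m := h1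
            _ ≤ ε * M + L * (M * ε ^ (0 + 1) * ∑ j ∈ Finset.range (s + 1), ((j.choose j : ℝ)) * L ^ j) := by
                have := mul_le_mul_of_nonneg_left B1 hε
                have := mul_le_mul_of_nonneg_left B2 hL
                linarith
            _ = M * ε ^ (0 + 1) * (1 + L * ∑ j ∈ Finset.range (s + 1), ((j.choose j : ℝ)) * L ^ j) := by
                ring
          | (t + 1) =>
            have B1 : e (t + 1) m ≤ M * ε ^ (t + 1) *
                ∑ j ∈ Finset.range (m - (t + 1)), (((t + j).choose j : ℝ)) * L ^ j := by
              have := ih (t + 1) hk'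
              simpa only [Nat.add_sub_cancel] using this
            obtain ⟨s, hs⟩ : ∃ s, m - (t + 1) = s + 1 := ⟨m - t - 2, by omega⟩
            have hm : m + 1 - (t + 1 + 1) = s + 1 := by omega
            have hm2 : m - (t + 1 + 1) = s := by omega
            rw [hs] at B1
            rw [hm2] at B2
            rw [hm]
            have hkey := key t s
            -- note coefficients: target (t+1+j).choose j; B2 has (t+1+j).choose j; B1 has (t+j).choose j
            have c1 := mul_le_mul_of_nonneg_left B1 hε
            have c2 := mul_le_mul_of_nonneg_left B2 hL
            calc e (t + 1 + 1) (m + 1) ≤ ε * e (t + 1) m + L * e (t + 1 + 1) m := h1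
            _ ≤ ε * (M * ε ^ (t + 1) * ∑ j ∈ Finset.range (s + 1), (((t + j).choose j : ℝ)) * L ^ j)
                + L * (M * ε ^ (t + 1 + 1) * ∑ j ∈ Finset.range s, (((t + 1 + j).choose j : ℝ)) * L ^ j) := by
                linarith
            _ = M * ε ^ (t + 1 + 1) *
                ((∑ j ∈ Finset.range (s + 1), (((t + j).choose j : ℝ)) * L ^ j)
                  + L * ∑ j ∈ Finset.range s, (((t + 1 + j).choose j : ℝ)) * L ^ j) := by
                ring
            _ = _ := by rw [hkey]
        · -- m = k' + 1 : e (k'+1) m = 0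
          have hm : m = k' + 1 := by omega
          subst hm
          have hz : e (k' + 1) (k' + 1) = 0 := hzero _ _ le_rfl
          have B1 : e k' (k' + 1) ≤ M * ε ^ k' *
              ∑ j ∈ Finset.range (k' + 1 - k'), (((k' - 1 + j).choose j : ℝ)) * L ^ j :=
            ih k' hk'
          have hd : k' + 1 - k' = 1 := by omega
          rw [hd] at B1
          simp only [Finset.sum_range_one, Nat.add_zero, Nat.choose_zero_right,
            Nat.cast_one, pow_zero, mul_one] at B1
          have hd2 : k' + 1 + 1 - (k' + 1) = 1 := by omega
          rw [hd2]
          simp only [Finset.sum_range_one, Nat.add_zero, Nat.choose_zero_right,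
            Nat.cast_one, pow_zero, mul_one]
          calc e (k' + 1) (k' + 1 + 1) ≤ ε * e k' (k' + 1) + L * e (k' + 1) (k' + 1) := h1
          _ = ε * e k' (k' + 1) := by rw [hz]; ring
          _ ≤ ε * (M * ε ^ k') := mul_le_mul_of_nonneg_left B1 hε
          _ = M * ε ^ (k' + 1) := by ring
  exact fun k m h => main m k h
end

section
/- Under the hypotheses of the adjoint construction — λ solving Aᵀλ' - Bᵀλ = ∂U/∂φ on [0,t_m] with λ(t_m)=0, and w = dφ/dp solving A w' + B w = -(dA/dp)φ' - (dB/dp)φ with w(0)=0 — the total sensitivity satisfies ∫₀^{t_m} (∂U/∂φ)(t)ᵀ w(t) dt = ∫₀^{t_m} λ(t)ᵀ ((dA/dp) φ'(t) + (dB/dp) φ(t)) dt. -/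
/-!
With `g t = λ(t) ⬝ᵥ A w(t)`, the Lagrange identity
`(Aᵀ λ' - Bᵀ λ) ⬝ᵥ w = g' - λ ⬝ᵥ (A w' + B w)` turns the adjoint equation into
`∫ (∂U/∂φ) ⬝ᵥ w = [g]₀^{t_m} - ∫ λ ⬝ᵥ (A w' + B w)`. The boundary term vanishes since
`λ(t_m) = 0` and `w(0) = 0`, and by the sensitivity equation `A w' + B w = -(A_p φ' + B_p φ)`.
-/

open Matrix Set

section BilinearFTC

variable {E F G : Type*} [NormedAddCommGroup E] [NormedSpace ℝ E]
  [NormedAddCommGroup F] [NormedSpace ℝ F] [NormedAddCommGroup G] [NormedSpace ℝ G]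
  [CompleteSpace G] {u u' : ℝ → E} {v v' : ℝ → F} {a b : ℝ}

theorem ContinuousLinearMap.integral_bilinear_hasDerivAt_eq_sub (B : E →L[ℝ] F →L[ℝ] G)
    (hu : ∀ t ∈ uIcc a b, HasDerivAt u (u' t) t) (hv : ∀ t ∈ uIcc a b, HasDerivAt v (v' t) t)
    (hu' : ContinuousOn u' (uIcc a b)) (hv' : ContinuousOn v' (uIcc a b)) :
    ∫ t in a..b, (B (u t) (v' t) + B (u' t) (v t)) = B (u b) (v b) - B (u a) (v a) := by
  have hu_cont : ContinuousOn u (uIcc a b) := HasDerivAt.continuousOn hu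
  have hv_cont : ContinuousOn v (uIcc a b) := HasDerivAt.continuousOn hv
  refine intervalIntegral.integral_eq_sub_of_hasDerivAt
    (fun t ht ↦ B.hasDerivAt_of_bilinear (fun _ ↦ hu t ht) (fun _ ↦ hv t ht)) ?_
  exact (((B.continuous.comp_continuousOn hu_cont).clm_apply hv').add
    ((B.continuous.comp_continuousOn hu').clm_apply hv_cont)).intervalIntegrable

end BilinearFTC

section AdjointPairing

variable {m n : Type*} [Fintype m] [Fintype n]

theorem transpose_mulVec_sub_dotProduct {R : Type*} [CommRing R] (A B : Matrix m n R)
    (l l' : m → R) (v v' : n → R) :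
    (Aᵀ *ᵥ l' - Bᵀ *ᵥ l) ⬝ᵥ v
      = (l ⬝ᵥ (A *ᵥ v') + l' ⬝ᵥ (A *ᵥ v)) - l ⬝ᵥ (A *ᵥ v' + B *ᵥ v) := by
  simp only [sub_dotProduct, dotProduct_add, mulVec_transpose, ← dotProduct_mulVec]
  ring

variable {l l' : ℝ → m → ℝ} {w w' : ℝ → n → ℝ} {a b : ℝ}

theorem integral_dotProduct_mulVec_hasDerivAt_eq_sub (A : Matrix m n ℝ)
    (hl : ∀ t ∈ uIcc a b, HasDerivAt l (l' t) t) (hw : ∀ t ∈ uIcc a b, HasDerivAt w (w' t) t)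
    (hl' : ContinuousOn l' (uIcc a b)) (hw' : ContinuousOn w' (uIcc a b)) :
    ∫ t in a..b, (l t ⬝ᵥ (A *ᵥ w' t) + l' t ⬝ᵥ (A *ᵥ w t))
      = l b ⬝ᵥ (A *ᵥ w b) - l a ⬝ᵥ (A *ᵥ w a) :=
  ((dotProductBilin ℝ ℝ).compl₂ A.mulVecLin).toContinuousBilinearMap
    |>.integral_bilinear_hasDerivAt_eq_sub hl hw hl' hw'

theorem integral_adjoint_dotProduct_eq (A B : Matrix m n ℝ)
    (hl : ∀ t ∈ uIcc a b, HasDerivAt l (l' t) t) (hw : ∀ t ∈ uIcc a b, HasDerivAt w (w' t) t)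
    (hl' : ContinuousOn l' (uIcc a b)) (hw' : ContinuousOn w' (uIcc a b)) :
    ∫ t in a..b, (Aᵀ *ᵥ l' t - Bᵀ *ᵥ l t) ⬝ᵥ w t
      = (l b ⬝ᵥ (A *ᵥ w b) - l a ⬝ᵥ (A *ᵥ w a))
        - ∫ t in a..b, l t ⬝ᵥ (A *ᵥ w' t + B *ᵥ w t) := by
  have hl_cont : ContinuousOn l (uIcc a b) := HasDerivAt.continuousOn hl
  have hw_cont : ContinuousOn w (uIcc a b) := HasDerivAt.continuousOn hw
  rw [intervalIntegral.integral_congr fun t _ ↦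
      transpose_mulVec_sub_dotProduct A B (l t) (l' t) (w t) (w' t),
    intervalIntegral.integral_sub (ContinuousOn.intervalIntegrable (by fun_prop))
      (ContinuousOn.intervalIntegrable (by fun_prop)),
    integral_dotProduct_mulVec_hasDerivAt_eq_sub A hl hw hl' hw']

end AdjointPairing

theorem stmt_14_general {n : ℕ} (A B Ap Bp : Matrix (Fin n) (Fin n) ℝ)
    (tm : ℝ) (htm : 0 ≤ tm)
    (lam lam' w w' φ φ' Uφ : ℝ → Fin n → ℝ)
    (hlam : ∀ t ∈ Set.Icc (0:ℝ) tm, HasDerivAt lam (lam' t) t)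
    (hw : ∀ t ∈ Set.Icc (0:ℝ) tm, HasDerivAt w (w' t) t)
    (hlamc : Continuous lam') (hwc : Continuous w')
    (hadj : ∀ t ∈ Set.Icc (0:ℝ) tm, Aᵀ *ᵥ lam' t - Bᵀ *ᵥ lam t = Uφ t)
    (hlamT : lam tm = 0)
    (hsens : ∀ t ∈ Set.Icc (0:ℝ) tm,
      A *ᵥ w' t + B *ᵥ w t = -(Ap *ᵥ φ' t) - (Bp *ᵥ φ t))
    (hw0 : w 0 = 0) :
    ∫ t in (0:ℝ)..tm, Uφ t ⬝ᵥ w t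
      = ∫ t in (0:ℝ)..tm, lam t ⬝ᵥ (Ap *ᵥ φ' t + Bp *ᵥ φ t) := by
  rw [← uIcc_of_le htm] at hlam hw hadj hsens
  have hU : ∫ t in (0:ℝ)..tm, Uφ t ⬝ᵥ w t
      = ∫ t in (0:ℝ)..tm, (Aᵀ *ᵥ lam' t - Bᵀ *ᵥ lam t) ⬝ᵥ w t :=
    intervalIntegral.integral_congr fun t ht ↦ by rw [hadj t ht]
  have hrhs : ∫ t in (0:ℝ)..tm, lam t ⬝ᵥ (Ap *ᵥ φ' t + Bp *ᵥ φ t)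
      = -∫ t in (0:ℝ)..tm, lam t ⬝ᵥ (A *ᵥ w' t + B *ᵥ w t) := by
    rw [← intervalIntegral.integral_neg]
    refine intervalIntegral.integral_congr fun t ht ↦ ?_
    rw [hsens t ht, ← dotProduct_neg]
    abel_nf
  rw [hU, hrhs, integral_adjoint_dotProduct_eq A B hlam hw hlamc.continuousOn hwc.continuousOn,
    hlamT, hw0]
  simp

theorem stmt_14 {n : ℕ} (A B Ap Bp : Matrix (Fin n) (Fin n) ℝ)
    (tm : ℝ) (htm : 0 ≤ tm)
    (lam lam' w w' φ φ' Uφ : ℝ → Fin n → ℝ)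
    (hlam : ∀ t ∈ Set.Icc (0:ℝ) tm, HasDerivAt lam (lam' t) t)
    (hw : ∀ t ∈ Set.Icc (0:ℝ) tm, HasDerivAt w (w' t) t)
    (hφ : ∀ t ∈ Set.Icc (0:ℝ) tm, HasDerivAt φ (φ' t) t)
    (hlamc : Continuous lam') (hwc : Continuous w') (hφc : Continuous φ')
    (hUc : Continuous Uφ)
    (hadj : ∀ t ∈ Set.Icc (0:ℝ) tm, Aᵀ *ᵥ lam' t - Bᵀ *ᵥ lam t = Uφ t)
    (hlamT : lam tm = 0)
    (hsens : ∀ t ∈ Set.Icc (0:ℝ) tm,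
      A *ᵥ w' t + B *ᵥ w t = -(Ap *ᵥ φ' t) - (Bp *ᵥ φ t))
    (hw0 : w 0 = 0) :
    ∫ t in (0:ℝ)..tm, Uφ t ⬝ᵥ w t
      = ∫ t in (0:ℝ)..tm, lam t ⬝ᵥ (Ap *ᵥ φ' t + Bp *ᵥ φ t) :=
  stmt_14_general A B Ap Bp tm htm lam lam' w w' φ φ' Uφ hlam hw hlamc hwc hadj hlamT hsens hw0
end
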